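/- Let Ω be a finite set and M a nonempty finite set of probability mass functions on Ω each with P(A) > 0 for all nonempty A. Fix events A, B with A ∩ B ≠ ∅ and Aᶜ ∩ B ≠ ∅. For gambles X_i, X_j, Z define the maximality dominance X ≻_C Y iff min_{P∈M} E_P(X − Y | C) > 0. Then (1_A·X_i + 1_{Aᶜ}·Z) ≻_B (1_A·X_j + 1_{Aᶜ}·Z) if and only if X_i ≻_{A∩B} X_j. -/
import Mathlib


open Finset

/-- Conditional expectation `(Σ_{ω∈C} X(ω)p(ω))/p(C)` on a finite space. -/
noncomputable def condE {Ω : Type*} [Fintype Ω] (p : Ω → ℝ) (X : Ω → ℝ) (C : Finset Ω) : ℝ :=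
  (∑ ω ∈ C, X ω * p ω) / (∑ ω ∈ C, p ω)

/-- Maximality dominance: `X ≻_C Y` iff `min_{P∈M} E_P(X − Y | C) > 0`. -/
noncomputable def dom {Ω : Type*} [Fintype Ω] (M : Finset (Ω → ℝ)) (hM : M.Nonempty)
    (X Y : Ω → ℝ) (C : Finset Ω) : Prop :=
  0 < M.inf' hM fun p => condE p (fun ω => X ω - Y ω) C

lemma div_pos_iff_num {N D : ℝ} (hD : 0 < D) : 0 < N / D ↔ 0 < N := by
  constructor
  · intro h
    have := mul_pos h hD
    rwa [div_mul_cancel₀ _ (ne_of_gt hD)] at this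
  · intro h; exact div_pos h hD

/-- Maximality dominance between `1_A·Xᵢ + 1_{Aᶜ}·Z` and `1_A·Xⱼ + 1_{Aᶜ}·Z`
conditional on `B` holds iff `Xᵢ` dominates `Xⱼ` conditional on `A ∩ B`. -/
theorem maximality_dominance_chance_node {Ω : Type*} [Fintype Ω] [DecidableEq Ω]
    (M : Finset (Ω → ℝ)) (hM : M.Nonempty)
    (hpos : ∀ p ∈ M, ∀ (E : Finset Ω), E.Nonempty → 0 < ∑ ω ∈ E, p ω)
    (hsum : ∀ p ∈ M, ∑ ω, p ω = 1)
    (A B : Finset Ω) (hAB : (A ∩ B).Nonempty) (hAcB : (Aᶜ ∩ B).Nonempty)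
    (Xi Xj Z : Ω → ℝ) :
    dom M hM (fun ω => if ω ∈ A then Xi ω else Z ω)
             (fun ω => if ω ∈ A then Xj ω else Z ω) B
      ↔ dom M hM Xi Xj (A ∩ B) := by
  have hB : B.Nonempty := by
    obtain ⟨ω, hω⟩ := hAB
    exact ⟨ω, (Finset.mem_inter.mp hω).2⟩
  unfold dom
  rw [Finset.lt_inf'_iff, Finset.lt_inf'_iff]
  apply forall_congr'
  intro p
  apply imp_congr_right
  intro hp
  have hnum : ∀ ω ∈ B,
      ((if ω ∈ A then Xi ω else Z ω) - (if ω ∈ A then Xj ω else Z ω)) * p ω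
        = (if ω ∈ A ∩ B then (Xi ω - Xj ω) * p ω else 0) := by
    intro ω hω
    by_cases h : ω ∈ A
    · simp [h, hω]
    · simp [h]
  have hsumeq : (∑ ω ∈ B,
      ((if ω ∈ A then Xi ω else Z ω) - (if ω ∈ A then Xj ω else Z ω)) * p ω)
        = ∑ ω ∈ A ∩ B, (Xi ω - Xj ω) * p ω := by
    rw [Finset.sum_congr rfl hnum, Finset.sum_ite_mem]
    congr 1
    ext ω
    simp only [Finset.mem_inter]
    tauto
  unfold condE
  rw [hsumeq, div_pos_iff_num (hpos p hp B hB),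
    div_pos_iff_num (hpos p hp (A ∩ B) hAB)]
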